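/- arXiv:1107.0848 — 3 statements merged into one kernel-verified Lean document; each statement's English description precedes it below -/
import Mathlib

section
/- In the four-door game with two doors revealed at once, for every Conie strategy (x, d) there exists a door u : Fin 4 such that for every Monte strategy m and every prize door p, Conie's final choice z is never equal to u; in particular she loses whenever p = u. -/
/-- Four-door game, two doors revealed at once. The door Monte offers: if
Conie's guess `x` equals the prize door `p`, Monte offers `m p`; otherwise he
is forced to reveal the two doors other than `x` and `p`, so the offer is `p`. -/
def offered (m : Fin 4 → Fin 4) (x p : Fin 4) : Fin 4 :=
  if p = x then m p else p

/-- Conie's final choice given her strategy `(x, d)`, Monte's strategy `m`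
and prize door `p`. -/
def finalChoice (x : Fin 4) (d : Fin 4 → Bool) (m : Fin 4 → Fin 4) (p : Fin 4) : Fin 4 :=
  if d (offered m x p) then offered m x p else x

/-- In the four-door game with two doors revealed at once, for every Conie
strategy `(x, d)` there is a door `u` that is never her final choice, whatever
Monte's strategy and prize location; in particular she loses whenever `p = u`. -/
theorem exists_never_chosen_door_four (x : Fin 4) (d : Fin 4 → Bool) :
    ∃ u : Fin 4,
      (∀ (m : Fin 4 → Fin 4), (∀ v, m v ≠ v) →
        ∀ p : Fin 4, finalChoice x d m p ≠ u) ∧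
      (∀ (m : Fin 4 → Fin 4), (∀ v, m v ≠ v) →
        ∀ p : Fin 4, p = u → finalChoice x d m p ≠ p) := by
  have offered_ne : ∀ (m : Fin 4 → Fin 4), (∀ v, m v ≠ v) → ∀ p, offered m x p ≠ x := by
    intro m hm p
    unfold offered
    split
    · next h => rw [h]; exact hm x
    · next h => exact h
  by_cases hu : ∃ u, u ≠ x ∧ d u = false
  · obtain ⟨u, hux, hdu⟩ := hu
    have key : ∀ (m : Fin 4 → Fin 4), (∀ v, m v ≠ v) → ∀ p, finalChoice x d m p ≠ u := by
      intro m hm p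
      unfold finalChoice
      split
      · next h =>
        intro he; rw [he] at h; rw [hdu] at h; exact Bool.false_ne_true h
      · exact fun he => hux he.symm
    refine ⟨u, key, fun m hm p hp => ?_⟩
    subst hp; exact key m hm p
  · push_neg at hu
    have key : ∀ (m : Fin 4 → Fin 4), (∀ v, m v ≠ v) → ∀ p, finalChoice x d m p ≠ x := by
      intro m hm p
      unfold finalChoice
      split
      · exact offered_ne m hm p
      · next h =>
        exact absurd (hu _ (offered_ne m hm p)) (by simp [h])
    refine ⟨x, key, fun m hm p hp => ?_⟩
    subst hp; exact key m hm p
end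

section
/- In the four-door game with two doors revealed at once, for any initial choice x : Fin 4, the always-switching strategy (x, fun _ => true) wins if and only if the prize door p is different from x, regardless of Monte's strategy m; consequently, for every Monte strategy m, the set of prize doors p for which this strategy wins has exactly 3 elements. -/
lemma aux_iff (x : Fin 4) (m : Fin 4 → Fin 4) (hm : ∀ v, m v ≠ v) (p : Fin 4) :
    finalChoice x (fun _ => true) m p = p ↔ p ≠ x := by
  simp only [finalChoice, offered, if_true]
  by_cases h : p = x
  · subst h
    simp [hm p]
  · simp [h]

/-- In the four-door game with two doors revealed at once, any always-switching
strategy wins exactly when the prize is not behind the initially chosen door,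
whatever Monte's strategy; consequently it wins for exactly 3 of the 4 prize
doors. -/
theorem always_switch_wins_iff_four (x : Fin 4) :
    (∀ (m : Fin 4 → Fin 4), (∀ v, m v ≠ v) →
      ∀ p : Fin 4, (finalChoice x (fun _ => true) m p = p ↔ p ≠ x)) ∧
    (∀ (m : Fin 4 → Fin 4), (∀ v, m v ≠ v) →
      (Finset.univ.filter (fun p => finalChoice x (fun _ => true) m p = p)).card = 3) := by
  refine ⟨fun m hm p => aux_iff x m hm p, fun m hm => ?_⟩
  have : (Finset.univ.filter (fun p => finalChoice x (fun _ => true) m p = p))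
      = Finset.univ.filter (fun p => p ≠ x) := by
    ext p; simp [aux_iff x m hm p]
  rw [this, Finset.filter_ne']
  simp
end

section
/- In the four-door game with two doors revealed at once, for every Conie strategy (x, d) and every Monte strategy m, the set of prize doors p : Fin 4 for which Conie wins has at most 3 elements; hence the winning probability under a uniformly random prize door is at most 3/4, and the always-switching strategies attain this maximum. -/
lemma four_key (x : Fin 4) (d : Fin 4 → Bool) (m : Fin 4 → Fin 4) (hm : ∀ v, m v ≠ v) :
    (Finset.univ.filter (fun p => finalChoice x d m p = p)).card ≤ 3 := by
  by_contra hcard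
  push_neg at hcard
  have h4 : (Finset.univ.filter (fun p => finalChoice x d m p = p)).card ≤ 4 := by
    simpa using Finset.card_le_univ (Finset.univ.filter (fun p => finalChoice x d m p = p))
  have heq : Finset.univ.filter (fun p => finalChoice x d m p = p) = Finset.univ :=
    Finset.eq_univ_of_card _ (by simp; omega)
  have hall := Finset.eq_univ_iff_forall.mp heq
  have h1 : finalChoice x d m x = x := (Finset.mem_filter.mp (hall x)).2
  have h2 : finalChoice x d m (m x) = m x := (Finset.mem_filter.mp (hall (m x))).2
  have ho1 : offered m x x = m x := if_pos rfl
  have ho2 : offered m x (m x) = m x := if_neg (hm x)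
  unfold finalChoice at h1 h2
  rw [ho1] at h1
  rw [ho2] at h2
  by_cases hdmx : d (m x) = true
  · rw [if_pos hdmx] at h1
    exact hm x h1
  · rw [if_neg hdmx] at h2
    exact hm x h2.symm

/-- In the four-door game with two doors revealed at once: every Conie strategy
wins for at most 3 of the 4 prize doors, hence with a uniformly random prize
door its winning probability is at most `3/4`; and always-switching strategies
attain this maximum. -/
theorem four_door_at_most_three_quarters :
    (∀ (x : Fin 4) (d : Fin 4 → Bool) (m : Fin 4 → Fin 4), (∀ v, m v ≠ v) →
      (Finset.univ.filter (fun p => finalChoice x d m p = p)).card ≤ 3) ∧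
    (∀ (x : Fin 4) (d : Fin 4 → Bool) (m : Fin 4 → Fin 4), (∀ v, m v ≠ v) →
      (PMF.uniformOfFintype (Fin 4)).toMeasure
        {p : Fin 4 | finalChoice x d m p = p} ≤ 3 / 4) ∧
    (∀ (x : Fin 4) (m : Fin 4 → Fin 4), (∀ v, m v ≠ v) →
      (PMF.uniformOfFintype (Fin 4)).toMeasure
        {p : Fin 4 | finalChoice x (fun _ => true) m p = p} = 3 / 4) := by
  refine ⟨four_key, ?_, ?_⟩
  · intro x d m hm
    rw [PMF.toMeasure_uniformOfFintype_apply _ (MeasurableSet.of_discrete)]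
    have hc : Nat.card {p : Fin 4 | finalChoice x d m p = p} ≤ 3 := by
      rw [Nat.card_eq_fintype_card, ← Set.toFinset_card]
      simpa [Set.toFinset_setOf] using four_key x d m hm
    rw [Fintype.card_eq_nat_card]
    have hcard4 : (Fintype.card (Fin 4) : ENNReal) = 4 := by norm_num
    rw [hcard4]
    gcongr
    exact_mod_cast hc
  · intro x m hm
    have hset : {p : Fin 4 | finalChoice x (fun _ => true) m p = p} = {x}ᶜ := by
      ext p
      simp only [Set.mem_setOf_eq, Set.mem_compl_iff, Set.mem_singleton_iff,
        finalChoice, offered, if_true]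
      by_cases hp : p = x
      · subst hp
        simp [hm p]
      · simp [hp]
    rw [hset, PMF.toMeasure_uniformOfFintype_apply _ (MeasurableSet.of_discrete)]
    have h3 : Nat.card ({x}ᶜ : Set (Fin 4)) = 3 := by
      rw [Nat.card_eq_fintype_card, Fintype.card_compl_set]
      simp
    rw [Fintype.card_eq_nat_card, h3]
    norm_num
end
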